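/- Let S = ⟨A ∣ u → v⟩ be a one-rule SRS such that |u| ≤ |v| and u is not a prefix of v. Then M_3 is not embeddable in the reduction graph G_S. -/

import Mathlib

/-- One-step reduction of the one-rule SRS `⟨A ∣ u → v⟩`: `w →_S w'`. -/
def Step {A : Type*} (u v w w' : List A) : Prop :=
  ∃ p q : List A, w = p ++ u ++ q ∧ w' = p ++ v ++ q

/-- One-step reduction of `⟨A ∣ u → v⟩` carried out at position `i`. -/
def StepAt {A : Type*} (u v : List A) (i : ℕ) (w w' : List A) : Prop :=
  ∃ p q : List A, p.length = i ∧ w = p ++ u ++ q ∧ w' = p ++ v ++ q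

/-- The diamond graph `M_k` is embeddable in the reduction graph `G_S` of
`S = ⟨A ∣ u → v⟩`: there are pairwise distinct words `x, y, z_1, …, z_k`
with `x →_S z_i` and `z_i →_S y` for every `i`. -/
def MkEmbeddable {A : Type*} (u v : List A) (k : ℕ) : Prop :=
  ∃ (x y : List A) (z : Fin k → List A),
    Function.Injective z ∧ (∀ i, x ≠ z i) ∧ (∀ i, y ≠ z i) ∧ x ≠ y ∧
    ∀ i, Step u v x (z i) ∧ Step u v (z i) y

/-- Projection from the decorated alphabet `A ⊕ A` (`inl a` = plain letter `a`,
`inr a` = decorated letter `a•`) back to `A`. -/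
def proj {A : Type*} : A ⊕ A → A := Sum.elim id id

/-- One-step reduction of the decorated SRS `S̄` carried out at position `i`:
some word `ū` projecting to `u` is replaced by the fully decorated `v•`. -/
def DecStepAt {A : Type*} (u v : List A) (i : ℕ) (w w' : List (A ⊕ A)) : Prop :=
  ∃ p q ubar : List (A ⊕ A),
    p.length = i ∧ ubar.map proj = u ∧
    w = p ++ ubar ++ q ∧ w' = p ++ v.map Sum.inr ++ q

/-- The leftmost decorated letter of `w` is at position `i`. -/
def FirstDecorated {A : Type*} (w : List (A ⊕ A)) (i : ℕ) : Prop :=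
  (∃ a : A, w[i]? = some (Sum.inr a)) ∧
  ∀ j < i, ∀ a : A, w[j]? ≠ some (Sum.inr a)

/-- The one-rule SRS `⟨A ∣ u → v⟩` is left cancellative:
`u, v` are nonempty and their first letters are distinct. -/
def LeftCancellative {A : Type*} (u v : List A) : Prop :=
  u ≠ [] ∧ v ≠ [] ∧ u.head? ≠ v.head?

/-- `w` is bordered with `T`: `T` is both a prefix and a suffix of `w`. -/
def Bordered {A : Type*} (T w : List A) : Prop :=
  T <+: w ∧ T <:+ w

/-- `T` is self-overlap-free: `OVL(T) = ∅`, i.e. there is no nonempty `w`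
with `T = x ++ w = w ++ y` for nonempty `x, y`. -/
def SelfOverlapFree {A : Type*} (T : List A) : Prop :=
  ∀ w x y : List A, w ≠ [] → x ≠ [] → y ≠ [] → T = x ++ w → T = w ++ y → False

/-- `glue T [R₁, …, R_k] = T R₁ T R₂ ⋯ T R_k T`, the word of `Bord_T` whose
canonical decomposition is `R₁, …, R_k`; thus `φ_T (glue T Rs) = Rs`
(a word of length `Rs.length` over the alphabet `B` of `T`-free words). -/
def glue {A : Type*} (T : List A) : List (List A) → List A
  | [] => T
  | R :: Rs => T ++ R ++ glue T Rs

/-!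
Let `δ` be the first position where `u` and `v` differ; `δ < |u| ≤ |v|` because `u` is not a
prefix of `v`. If `x → z` at position `i` and `z → y` at position `j`, then `x` and `y` first
differ at position `min i j + δ`: below it both agree with `z`, and at it one of them carries
`u[δ]` and the other `v[δ]`. So `min i j` is the same for every middle vertex `z` of an
embedded `M_k`. With three middle vertices, two of them share `i` or two share `j`, and a
rewrite at a fixed position is determined by either of its ends, so these two coincide.
-/

def FirstDiff {A : Type*} (x y : List A) (n : ℕ) : Prop :=
  x.take n = y.take n ∧ x[n]? ≠ y[n]?

section

variable {A : Type*}

theorem List.take_eq_take_of_le {l l' : List A} {m n : ℕ} (h : l.take m = l'.take m)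
    (hnm : n ≤ m) : l.take n = l'.take n := by
  rw [← min_eq_left hnm, ← List.take_take, h, List.take_take]

theorem List.getElem?_eq_of_take_eq {l l' : List A} {m k : ℕ} (h : l.take m = l'.take m)
    (hk : k < m) : l[k]? = l'[k]? := by
  rw [← List.getElem?_take_of_lt hk, h, List.getElem?_take_of_lt hk]

theorem List.getElem?_append_append_length_add {p m q : List A} {k : ℕ} (hk : k < m.length) :
    (p ++ m ++ q)[p.length + k]? = m[k]? := by
  rw [List.append_assoc, List.getElem?_append_right (by omega), Nat.add_sub_cancel_left,
    List.getElem?_append_left hk]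

theorem List.append_append_inj {p₁ p₂ m q₁ q₂ : List A} (h : p₁ ++ m ++ q₁ = p₂ ++ m ++ q₂)
    (hp : p₁.length = p₂.length) : p₁ = p₂ ∧ q₁ = q₂ := by
  simp only [List.append_assoc] at h
  obtain ⟨rfl, hq⟩ := List.append_inj h hp
  exact ⟨rfl, List.append_cancel_left hq⟩

theorem FirstDiff.unique {x y : List A} {m n : ℕ} (hm : FirstDiff x y m)
    (hn : FirstDiff x y n) : m = n := by
  by_contra hne
  rcases Nat.lt_or_gt_of_ne hne with h | h
  · exact hm.2 (List.getElem?_eq_of_take_eq hn.1 h)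
  · exact hn.2 (List.getElem?_eq_of_take_eq hm.1 h)

theorem exists_firstDiff_of_ne {x y : List A} (hne : x ≠ y) : ∃ n, FirstDiff x y n := by
  classical
  have hex : ∃ n : ℕ, x[n]? ≠ y[n]? := by
    by_contra! h
    exact hne (List.ext_getElem? h)
  refine ⟨Nat.find hex, List.ext_getElem? fun k => ?_, Nat.find_spec hex⟩
  simp only [List.getElem?_take]
  split_ifs with hk
  · exact not_not.mp (Nat.find_min hex hk)
  · rfl

theorem exists_firstDiff_lt_length_of_not_prefix {u v : List A} (hpre : ¬ u <+: v) :
    ∃ δ < u.length, FirstDiff u v δ := by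
  obtain ⟨δ, hδ⟩ := exists_firstDiff_of_ne (fun h : u = v => hpre (h ▸ List.prefix_refl u))
  refine ⟨δ, ?_, hδ⟩
  by_contra! hle
  apply hpre
  rw [← List.take_of_length_le hle, hδ.1]
  exact List.take_prefix δ v

theorem Step.exists_stepAt {u v w w' : List A} (h : Step u v w w') :
    ∃ i, StepAt u v i w w' := by
  obtain ⟨p, q, hw, hw'⟩ := h
  exact ⟨p.length, p, q, rfl, hw, hw'⟩

theorem StepAt.right_unique {u v w w₁ w₂ : List A} {i : ℕ} (h₁ : StepAt u v i w w₁)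
    (h₂ : StepAt u v i w w₂) : w₁ = w₂ := by
  obtain ⟨p₁, q₁, hp₁, hw₁, rfl⟩ := h₁
  obtain ⟨p₂, q₂, hp₂, hw₂, rfl⟩ := h₂
  obtain ⟨rfl, rfl⟩ := List.append_append_inj (hw₁.symm.trans hw₂) (hp₁.trans hp₂.symm)
  rfl

theorem StepAt.left_unique {u v w₁ w₂ w : List A} {i : ℕ} (h₁ : StepAt u v i w₁ w)
    (h₂ : StepAt u v i w₂ w) : w₁ = w₂ := by
  obtain ⟨p₁, q₁, hp₁, rfl, hw₁⟩ := h₁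
  obtain ⟨p₂, q₂, hp₂, rfl, hw₂⟩ := h₂
  obtain ⟨rfl, rfl⟩ := List.append_append_inj (hw₁.symm.trans hw₂) (hp₁.trans hp₂.symm)
  rfl

theorem StepAt.take_eq {u v w w' : List A} {i δ : ℕ} (h : StepAt u v i w w')
    (hu : δ ≤ u.length) (hv : δ ≤ v.length) (huv : u.take δ = v.take δ) :
    w.take (i + δ) = w'.take (i + δ) := by
  obtain ⟨p, q, rfl, rfl, rfl⟩ := h
  simp only [List.append_assoc, List.take_length_add_append, List.take_append_of_le_length hu,
    List.take_append_of_le_length hv, huv]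

theorem StepAt.getElem?_source {u v w w' : List A} {i k : ℕ} (h : StepAt u v i w w')
    (hk : k < u.length) : w[i + k]? = u[k]? := by
  obtain ⟨p, q, rfl, rfl, rfl⟩ := h
  exact List.getElem?_append_append_length_add hk

theorem StepAt.getElem?_target {u v w w' : List A} {i k : ℕ} (h : StepAt u v i w w')
    (hk : k < v.length) : w'[i + k]? = v[k]? := by
  obtain ⟨p, q, rfl, rfl, rfl⟩ := h
  exact List.getElem?_append_append_length_add hk

theorem firstDiff_of_stepAt_stepAt {u v x y z : List A} {i j δ : ℕ} (hδ : FirstDiff u v δ)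
    (hu : δ < u.length) (hv : δ < v.length) (hxz : StepAt u v i x z) (hzy : StepAt u v j z y) :
    FirstDiff x y (min i j + δ) := by
  have hx := hxz.take_eq hu.le hv.le hδ.1
  have hy := hzy.take_eq hu.le hv.le hδ.1
  refine ⟨(List.take_eq_take_of_le hx (by omega)).trans
    (List.take_eq_take_of_le hy (by omega)), ?_⟩
  rcases lt_trichotomy i j with hij | rfl | hij
  · rw [min_eq_left hij.le, hxz.getElem?_source hu,
      ← List.getElem?_eq_of_take_eq hy (by omega), hxz.getElem?_target hv]
    exact hδ.2
  · exact absurd ((hxz.getElem?_target hv).symm.trans (hzy.getElem?_source hu)) (Ne.symm hδ.2)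
  · rw [min_eq_right hij.le, List.getElem?_eq_of_take_eq hx (by omega),
      hzy.getElem?_source hu, hzy.getElem?_target hv]
    exact hδ.2

theorem exists_ne_and_or_of_forall_or {ι : Type*} [Fintype ι] (hι : 2 < Fintype.card ι)
    {P Q : ι → Prop} (h : ∀ k, P k ∨ Q k) :
    ∃ k l, k ≠ l ∧ (P k ∧ P l ∨ Q k ∧ Q l) := by
  obtain ⟨k, l, hkl, hPkl⟩ := Fintype.exists_ne_map_eq_of_card_lt P (by simpa using hι)
  refine ⟨k, l, hkl, ?_⟩
  by_cases hPk : P k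
  · exact Or.inl ⟨hPk, hPkl ▸ hPk⟩
  · exact Or.inr ⟨(h k).resolve_left hPk, (h l).resolve_left (hPkl ▸ hPk)⟩

end

/-- if `|u| ≤ |v|` and `u` is not a prefix of `v`, then `M_3` is
not embeddable in `G_S`. -/
theorem M3_not_embeddable_of_not_prefix {A : Type*} (u v : List A)
    (hlen : u.length ≤ v.length) (hpre : ¬ u <+: v) :
    ¬ MkEmbeddable u v 3 := by
  rintro ⟨x, y, z, hinj, -, -, -, hstep⟩
  obtain ⟨δ, hu, hδ⟩ := exists_firstDiff_lt_length_of_not_prefix hpre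
  choose i hi using fun k => (hstep k).1.exists_stepAt
  choose j hj using fun k => (hstep k).2.exists_stepAt
  have hfirst k := firstDiff_of_stepAt_stepAt hδ hu (hu.trans_le hlen) (hi k) (hj k)
  have hmin k : i k = min (i 0) (j 0) ∨ j k = min (i 0) (j 0) := by
    have := Nat.add_right_cancel ((hfirst k).unique (hfirst 0))
    omega
  obtain ⟨k, l, hkl, ⟨hk, hl⟩ | ⟨hk, hl⟩⟩ := exists_ne_and_or_of_forall_or (by simp) hmin
  · exact hkl (hinj ((hi k).right_unique (hk.trans hl.symm ▸ hi l)))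
  · exact hkl (hinj ((hj k).left_unique (hk.trans hl.symm ▸ hj l)))
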